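/- Let G, G_T be cyclic groups of prime order p with generator g and non-degenerate bilinear pairing e : G × G → G_T. Suppose a commitment C ∈ G and point ω satisfy two accepting opening equations: e(C·g^{−y}, g) = e(π, g^z) and e(C·g^{−y'}, g) = e(π', g^z), with y ≠ y' in 𝔽_p and z ≠ 0. Then (π/π')^{1/(y'−y)} = g^{1/z}; i.e., from two distinct accepted openings one can compute g^{1/z}. -/
import Mathlib


/-- Position-binding reduction: from two accepting openings of the same
commitment `C` at the same point, with distinct values `y ≠ y'` and `z ≠ 0`,
one computes `g^{1/z}`: `(π/π')^{1/(y'-y)} = g^{1/z}`.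
Exponents live in `𝔽_p = ZMod p` and `x ^ (a : ZMod p).val` denotes
exponentiation of a group element by a field exponent. -/
theorem tensor_commitment_position_binding
    (p : ℕ) [Fact p.Prime]
    (G GT : Type*) [CommGroup G] [CommGroup GT]
    (g : G) (hgen : ∀ x : G, x ∈ Subgroup.zpowers g) (hord : orderOf g = p)
    (e : G → G → GT)
    (hbilin : ∀ (S T : G) (a b : ℕ), e (S ^ a) (T ^ b) = e S T ^ (a * b))
    (hnondeg : e g g ≠ 1)
    (C π π' : G) (y y' z : ZMod p) (hy : y ≠ y') (hz : z ≠ 0)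
    (hacc : e (C * (g ^ y.val)⁻¹) g = e π (g ^ z.val))
    (hacc' : e (C * (g ^ y'.val)⁻¹) g = e π' (g ^ z.val)) :
    (π * π'⁻¹) ^ ((y' - y)⁻¹ : ZMod p).val = g ^ (z⁻¹ : ZMod p).val := by
  have hp : p.Prime := Fact.out
  set h := e g g with hh
  -- exponent comparison for g
  have hg1 : ∀ m n : ℕ, g ^ m = g ^ n ↔ (m : ZMod p) = (n : ZMod p) := by
    intro m n
    rw [pow_eq_pow_iff_modEq, hord, ← ZMod.natCast_eq_natCast_iff]
  have keyg : ∀ x y : ZMod p, g ^ x.val = g ^ y.val ↔ x = y := by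
    intro x y
    rw [hg1]
    simp [ZMod.natCast_val, ZMod.cast_id]
  -- order of h is p
  have hgp : g ^ p = 1 := by rw [← hord]; exact pow_orderOf_eq_one g
  have hp1 : h ^ p = 1 := by
    have h1 := hbilin g g p 1
    have h0 := hbilin g g 0 1
    rw [hgp] at h1
    simp only [pow_one, pow_zero, zero_mul, mul_one] at h1 h0
    rw [h0] at h1
    exact h1.symm
  have hordh : orderOf h = p := orderOf_eq_prime hp1 hnondeg
  have hT1 : ∀ m n : ℕ, h ^ m = h ^ n ↔ (m : ZMod p) = (n : ZMod p) := by
    intro m n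
    rw [pow_eq_pow_iff_modEq, hordh, ← ZMod.natCast_eq_natCast_iff]
  -- add/mul/sub laws for exponents
  have hadd : ∀ x y : ZMod p, g ^ x.val * g ^ y.val = g ^ (x + y).val := by
    intro x y
    rw [← pow_add, hg1]
    push_cast [ZMod.natCast_val, ZMod.cast_id]
    ring
  have hmul : ∀ x y : ZMod p, (g ^ x.val) ^ y.val = g ^ (x * y).val := by
    intro x y
    rw [← pow_mul, hg1]
    push_cast [ZMod.natCast_val, ZMod.cast_id]
    ring
  have hsub : ∀ x y : ZMod p, g ^ x.val * (g ^ y.val)⁻¹ = g ^ (x - y).val := by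
    intro x y
    have := hadd (x - y) y
    rw [sub_add_cancel] at this
    rw [← this]
    group
  -- representations
  have rep : ∀ x : G, ∃ c : ZMod p, x = g ^ c.val := by
    intro x
    obtain ⟨k, hk⟩ := Subgroup.mem_zpowers_iff.mp (hgen x)
    refine ⟨(k : ZMod p), ?_⟩
    rw [← hk]
    have : g ^ k = g ^ (((k : ZMod p).val : ℤ)) := by
      rw [zpow_eq_zpow_iff_modEq, hord, ← ZMod.intCast_eq_intCast_iff]
      push_cast [ZMod.natCast_val, ZMod.cast_id]
      norm_cast
    rw [this, zpow_natCast]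
  obtain ⟨c, hc⟩ := rep C
  obtain ⟨a, ha⟩ := rep π
  obtain ⟨b, hb⟩ := rep π'
  -- turn accepting equations into exponent equations
  have conv : ∀ (w d : ZMod p), e (C * (g ^ w.val)⁻¹) g = e (g ^ d.val) (g ^ z.val)
      → c - w = d * z := by
    intro w d heq
    rw [hc, hsub] at heq
    have e1 : e (g ^ (c - w).val) g = h ^ ((c - w).val * 1) := by
      have := hbilin g g ((c - w).val) 1
      rwa [pow_one] at this
    have e2 : e (g ^ d.val) (g ^ z.val) = h ^ (d.val * z.val) := hbilin g g _ _
    rw [e1, e2] at heq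
    rw [hT1] at heq
    push_cast [ZMod.natCast_val, ZMod.cast_id] at heq
    simpa using heq
  have h1 : c - y = a * z := conv y a (by rw [← ha]; exact hacc)
  have h2 : c - y' = b * z := conv y' b (by rw [← hb]; exact hacc')
  -- finish
  rw [ha, hb, hsub, hmul, keyg]
  have hyy : y' - y ≠ 0 := sub_ne_zero.mpr (Ne.symm hy)
  have hab : (a - b) * z = y' - y := by linear_combination h2 - h1
  field_simp
  linear_combination hab
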